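/- Let F be a Furstenberg family and let π : (X,T) → (Y,S) be a factor map between topological dynamical systems. Then: (1) if x ∈ X is F-product recurrent, then π(x) is F-product recurrent; (2) if x is π-distal and π(x) is F-product recurrent, then x is F-product recurrent; (3) in particular, if π⁻¹(π(x)) = {x} and π(x) is F-product recurrent, then x is F-product recurrent. -/

import Mathlib

open Set Filter Topology Function

namespace PaperFormal

/-- The return-time set `N(x,U) = {n ∈ ℤ₊ : Tⁿ x ∈ U}`. -/
def retTimes {X : Type} (T : X → X) (x : X) (U : Set X) : Set ℕ :=
  {n : ℕ | T^[n] x ∈ U}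

/-- A point is recurrent if `N(x,U)` is infinite for every neighborhood `U` of `x`. -/
def RecurrentPt {X : Type} [TopologicalSpace X] (T : X → X) (x : X) : Prop :=
  ∀ U ∈ nhds x, (retTimes T x U).Infinite

/-- The (forward) orbit closure of a point. -/
def orbitClosure {X : Type} [TopologicalSpace X] (T : X → X) (x : X) : Set X :=
  closure (Set.range fun n : ℕ => T^[n] x)

/-- A pair `(x,y)` is proximal if `lim T^{nᵢ} x = lim T^{nᵢ} y` along some sequence `nᵢ`. -/
def ProximalPair {X : Type} [TopologicalSpace X] (T : X → X) (x y : X) : Prop :=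
  ∃ (u : ℕ → ℕ) (z : X),
    Tendsto (fun i => T^[u i] x) atTop (nhds z) ∧
    Tendsto (fun i => T^[u i] y) atTop (nhds z)

/-- A point `x` is distal if every `y` in its orbit closure proximal to `x` equals `x`. -/
def DistalPt {X : Type} [TopologicalSpace X] (T : X → X) (x : X) : Prop :=
  ∀ y ∈ orbitClosure T x, ProximalPair T x y → y = x

/-- `A` is a minimal set: nonempty, closed, invariant, with no proper such subset. -/
def IsMinimalSet {X : Type} [TopologicalSpace X] (T : X → X) (A : Set X) : Prop :=
  A.Nonempty ∧ IsClosed A ∧ Set.MapsTo T A A ∧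
    ∀ B ⊆ A, B.Nonempty → IsClosed B → Set.MapsTo T B B → B = A

/-- A point is minimal (almost periodic) if its orbit closure is a minimal set. -/
def IsMinimalPt {X : Type} [TopologicalSpace X] (T : X → X) (x : X) : Prop :=
  IsMinimalSet T (orbitClosure T x)

/-- A minimal system: no proper nonempty closed invariant subset. -/
def MinimalSys {X : Type} [TopologicalSpace X] (T : X → X) : Prop :=
  ∀ B : Set X, B.Nonempty → IsClosed B → Set.MapsTo T B B → B = Set.univ

/-- A transitive system: `N(U,V)` is infinite for all opene `U`, `V`. -/
def TransitiveSys {X : Type} [TopologicalSpace X] (T : X → X) : Prop :=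
  ∀ U V : Set X, IsOpen U → IsOpen V → U.Nonempty → V.Nonempty →
    {n : ℕ | (U ∩ T^[n] ⁻¹' V).Nonempty}.Infinite

/-- Transitivity of the subsystem on an invariant subset `A` (relative open sets). -/
def TransitiveOn {X : Type} [TopologicalSpace X] (T : X → X) (A : Set X) : Prop :=
  ∀ U V : Set X, IsOpen U → IsOpen V → (U ∩ A).Nonempty → (V ∩ A).Nonempty →
    {n : ℕ | (U ∩ A ∩ T^[n] ⁻¹' V).Nonempty}.Infinite

/-- A transitive point: a point with dense forward orbit. -/
def TransPt {X : Type} [TopologicalSpace X] (T : X → X) (x : X) : Prop :=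
  Dense (Set.range fun n : ℕ => T^[n] x)

/-- Finite sums of the sequence `p` over nonempty finite index sets contained in `[n,∞)`. -/
def FSfrom (p : ℕ → ℕ) (n : ℕ) : Set ℕ :=
  {m | ∃ α : Finset ℕ, α.Nonempty ∧ (∀ i ∈ α, n ≤ i) ∧ m = ∑ i ∈ α, p i}

/-- Finite sums of the sequence `p` over nonempty finite index sets. -/
def FS (p : ℕ → ℕ) : Set ℕ := FSfrom p 0

/-- An IP set: a set containing all finite sums of some sequence of natural numbers. -/
def IPSet (A : Set ℕ) : Prop :=
  ∃ p : ℕ → ℕ, (∀ i, 0 < p i) ∧ FS p ⊆ A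

/-- An IP* set: a set meeting every IP set. -/
def IPStar (A : Set ℕ) : Prop :=
  ∀ B : Set ℕ, IPSet B → (A ∩ B).Nonempty

/-- A syndetic set: a set with bounded gaps. -/
def Syndetic (S : Set ℕ) : Prop :=
  ∃ N : ℕ, ∀ m : ℕ, ∃ k ∈ S, m ≤ k ∧ k ≤ m + N

/-- A thick set: a set containing arbitrarily long runs of consecutive integers. -/
def Thick (S : Set ℕ) : Prop :=
  ∀ n : ℕ, ∃ m : ℕ, ∀ i ≤ n, m + i ∈ S

/-- A piecewise syndetic set: an intersection of a syndetic set with a thick set. -/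
def PiecewiseSyndetic (A : Set ℕ) : Prop :=
  ∃ S₁ S₂ : Set ℕ, Syndetic S₁ ∧ Thick S₂ ∧ A = S₁ ∩ S₂

/-- A thickly syndetic set: a set meeting every piecewise syndetic set. -/
def ThicklySyndetic (A : Set ℕ) : Prop :=
  ∀ B : Set ℕ, PiecewiseSyndetic B → (A ∩ B).Nonempty

/-- `x` is `F`-recurrent for the family `F` if `N(x,U) ∈ F` for every neighborhood `U`. -/
def FRecurrentPt {X : Type} [TopologicalSpace X] (F : Set (Set ℕ)) (T : X → X) (x : X) :
    Prop :=
  ∀ U ∈ nhds x, retTimes T x U ∈ F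

/-- `x` is `F`-product recurrent: `(x,y)` is recurrent for every `F`-recurrent point `y`
in any topological dynamical system `(Y,S)`. -/
def FProductRecurrent {X : Type} [TopologicalSpace X] (F : Set (Set ℕ)) (T : X → X)
    (x : X) : Prop :=
  ∀ (Y : Type) [MetricSpace Y] [CompactSpace Y] (S : Y → Y),
    Continuous S → Function.Surjective S →
      ∀ y : Y, FRecurrentPt F S y → RecurrentPt (Prod.map T S) (x, y)

/-- A joining of `(X,T)` and `(Y,S)`: a nonempty closed invariant subset of `X × Y`
projecting onto both coordinates. -/
def Joining {X Y : Type} [TopologicalSpace X] [TopologicalSpace Y]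
    (T : X → X) (S : Y → Y) (J : Set (X × Y)) : Prop :=
  J.Nonempty ∧ IsClosed J ∧ Set.MapsTo (Prod.map T S) J J ∧
    Prod.fst '' J = Set.univ ∧ Prod.snd '' J = Set.univ

/-- Two systems are disjoint if their only joining is the full product. -/
def DisjointSys {X Y : Type} [TopologicalSpace X] [TopologicalSpace Y]
    (T : X → X) (S : Y → Y) : Prop :=
  ∀ J : Set (X × Y), Joining T S J → J = Set.univ

/-- Property (★) of a point: for each neighborhood `V` of `x` there is `n` such that for
every finite set `S` whose distinct elements are at distance `≥ n`, some common shift `ℓ`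
puts all of `T^{s+ℓ} x`, `s ∈ S`, inside `V`. -/
def StarProp {X : Type} [TopologicalSpace X] (T : X → X) (x : X) : Prop :=
  ∀ V ∈ nhds x, ∃ n : ℕ, ∀ S : Finset ℕ,
    (∀ s ∈ S, ∀ t ∈ S, s < t → n ≤ t - s) →
      ∃ ℓ : ℕ, ∀ s ∈ S, T^[s + ℓ] x ∈ V

/-- `F` is an independence set for the pair `(U₀, U₁)`. -/
def IndepSet {X : Type} (T : X → X) (U₀ U₁ : Set X) (F : Set ℕ) : Prop :=
  ∀ J : Finset ℕ, ↑J ⊆ F → J.Nonempty → ∀ s : ℕ → Bool,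
    (⋂ j ∈ J, T^[j] ⁻¹' (if s j then U₁ else U₀)).Nonempty

/-! Factor maps such as `π × id` send recurrent points to recurrent points, which gives (1).
For (2), work in the enveloping semigroup of `(X,T)`, the pointwise closure of the iterates `T^[n]`
in `X → X`. If `ρ x` is recurrent for a factor map `ρ`, limits of `T^[n]` along return times of
`ρ x` give elements of `E = ⋂ₘ closure {T^[n] | n ≥ m}` preserving the fibre of `ρ x`; they form a
nonempty compact subsemigroup, which by the Ellis–Nakamura lemma contains an idempotent `u`.
Then `x' = u x` lies in the fibre, is recurrent because `u x' = x'` with `u ∈ E`, and is proximal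
to `x` because `u x' = u x`. For `π × id : X × Z → Y × Z` this turns the recurrence of `(π x, z)`
into that of `(x', z)` with `x'` proximal to `x` in the fibre of `π x`, and `π`-distality gives
`x' = x`. -/

theorem recurrentPt_iff_mapClusterPt {X : Type} [TopologicalSpace X] {T : X → X} {x : X} :
    RecurrentPt T x ↔ MapClusterPt x atTop fun n => T^[n] x := by
  simp only [RecurrentPt, mapClusterPt_iff_frequently, Nat.frequently_atTop_iff_infinite]
  rfl

theorem exists_comp_self_eq_of_isCompact {X : Type} [TopologicalSpace X] [T2Space X]
    {G : Set (X → X)} (hne : G.Nonempty) (hG : IsCompact G)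
    (hcomp : ∀ f ∈ G, ∀ g ∈ G, f ∘ g ∈ G) : ∃ u ∈ G, u ∘ u = u :=
  letI : Semigroup (X → X) := { mul := (· ∘ ·), mul_assoc := fun _ _ _ => rfl }
  exists_idempotent_in_compact_subsemigroup
    (fun r => continuous_pi fun a => continuous_apply (r a)) G hne hG hcomp

section Envelope

variable {X : Type} [TopologicalSpace X] {T : X → X}

def envelopeFrom (T : X → X) (m : ℕ) : Set (X → X) :=
  closure ((fun n => T^[n]) '' Ici m)

theorem iterate_mem_envelopeFrom {m n : ℕ} (h : m ≤ n) : T^[n] ∈ envelopeFrom T m :=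
  subset_closure ⟨n, h, rfl⟩

theorem envelopeFrom_subset_of_isClosed {m : ℕ} {C : Set (X → X)} (hC : IsClosed C)
    (h : ∀ n, m ≤ n → T^[n] ∈ C) : envelopeFrom T m ⊆ C :=
  closure_minimal (by rintro _ ⟨n, hn, rfl⟩; exact h n hn) hC

theorem comp_mem_envelopeFrom (hT : Continuous T) {m : ℕ} {p q : X → X}
    (hp : p ∈ envelopeFrom T 0) (hq : q ∈ envelopeFrom T m) : p ∘ q ∈ envelopeFrom T m := by
  have iterate_comp_mem : ∀ n, T^[n] ∘ q ∈ envelopeFrom T m := fun n =>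
    map_mem_closure (f := (T^[n] ∘ ·))
      (continuous_pi fun a => (hT.iterate n).comp (continuous_apply a)) hq
      (by
        rintro _ ⟨k, hk, rfl⟩
        exact ⟨n + k, le_add_left (mem_Ici.mp hk), iterate_add T n k⟩)
  simpa only [envelopeFrom, closure_closure] using
    map_mem_closure (f := (· ∘ q)) (t := envelopeFrom T m)
      (continuous_pi fun a => continuous_apply (q a)) hp
      (by rintro _ ⟨n, -, rfl⟩; exact iterate_comp_mem n)

theorem apply_eq_of_mem_envelopeFrom {Y : Type} [TopologicalSpace Y] [T2Space Y] {S : Y → Y}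
    {ρ : X → Y} (hρ : Continuous ρ) (hsemi : Semiconj ρ T S) {m : ℕ} {p : X → X}
    (hp : p ∈ envelopeFrom T m) {a b : X} (hab : ρ a = ρ b) : ρ (p a) = ρ (p b) :=
  envelopeFrom_subset_of_isClosed (C := {h | ρ (h a) = ρ (h b)})
    (isClosed_eq (hρ.comp (continuous_apply a)) (hρ.comp (continuous_apply b)))
    (fun n _ => by simp only [mem_ofPred_eq, (hsemi.iterate_right n).eq, hab]) hp

theorem recurrentPt_of_apply_eq_self {u : X → X} (hu : ∀ m, u ∈ envelopeFrom T m) {a : X}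
    (ha : u a = a) : RecurrentPt T a := by
  intro U hU
  refine infinite_of_forall_exists_gt fun m => ?_
  have hmem : u a ∈ closure ((fun n => T^[n] a) '' Ici (m + 1)) :=
    map_mem_closure (f := fun h => h a) (continuous_apply a) (hu (m + 1))
      (by rintro _ ⟨n, hn, rfl⟩; exact ⟨n, hn, rfl⟩)
  obtain ⟨_, hnU, n, hn, rfl⟩ := mem_closure_iff_nhds.mp hmem U (by rwa [ha])
  exact ⟨n, hnU, hn⟩

theorem proximalPair_of_apply_eq [FirstCountableTopology X] {u : X → X}
    (hu : u ∈ envelopeFrom T 0) {a b : X} (hab : u a = u b) : ProximalPair T a b := by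
  have hmem : (u a, u b) ∈ closure (range fun n => (T^[n] a, T^[n] b)) :=
    map_mem_closure (f := fun h => (h a, h b))
      ((continuous_apply a).prodMk (continuous_apply b)) hu
      (by rintro _ ⟨n, -, rfl⟩; exact ⟨n, rfl⟩)
  obtain ⟨s, hs, hlim⟩ := mem_closure_iff_seq_limit.mp hmem
  choose ν hν using hs
  have hlim' : Tendsto (fun i => (T^[ν i] a, T^[ν i] b)) atTop (𝓝 (u a, u b)) := by
    simpa only [hν] using hlim
  exact ⟨ν, u a, (continuous_fst.tendsto _).comp hlim',
    hab ▸ (continuous_snd.tendsto _).comp hlim'⟩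

end Envelope

section Factor

variable {X Y : Type} [TopologicalSpace X] [TopologicalSpace Y] {T : X → X} {S : Y → Y}
  {ρ : X → Y}

theorem RecurrentPt.map (hρ : Continuous ρ) (hsemi : Semiconj ρ T S) {x : X}
    (h : RecurrentPt T x) : RecurrentPt S (ρ x) := fun U hU =>
  (h _ (hρ.continuousAt.preimage_mem_nhds hU)).mono fun n hn => by
    simpa only [retTimes, mem_ofPred_eq, mem_preimage, (hsemi.iterate_right n).eq] using hn

theorem ProximalPair.map (hρ : Continuous ρ) (hsemi : Semiconj ρ T S) {a b : X}
    (h : ProximalPair T a b) : ProximalPair S (ρ a) (ρ b) := by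
  obtain ⟨ν, z, ha, hb⟩ := h
  refine ⟨ν, ρ z, ?_, ?_⟩ <;>
    simp only [← (hsemi.iterate_right _).eq] <;>
    exact (hρ.tendsto z).comp ‹_›

theorem exists_mem_envelopeFrom_apply_eq [CompactSpace X] [T2Space Y] (hρ : Continuous ρ)
    (hsemi : Semiconj ρ T S) {x : X} (hrec : RecurrentPt S (ρ x)) :
    ∃ p : X → X, (∀ m, p ∈ envelopeFrom T m) ∧ ρ (p x) = ρ x := by
  obtain ⟨𝒰, h𝒰, hret⟩ :=
    mapClusterPt_iff_ultrafilter.mp (recurrentPt_iff_mapClusterPt.mp hrec)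
  set p := (𝒰.map fun n => T^[n]).lim
  have hp : Tendsto (fun n => T^[n]) 𝒰 (𝓝 p) := (𝒰.map fun n => T^[n]).le_nhds_lim
  refine ⟨p, fun m => isClosed_closure.mem_of_tendsto hp ?_, ?_⟩
  · filter_upwards [h𝒰 (Ici_mem_atTop m)] with n hn using iterate_mem_envelopeFrom hn
  · refine tendsto_nhds_unique
      ((hρ.tendsto _).comp ((continuous_apply x).tendsto p |>.comp hp)) ?_
    simpa only [comp_def, (hsemi.iterate_right _).eq] using hret

theorem exists_recurrentPt_proximalPair_of_recurrentPt_map [CompactSpace X] [T2Space X]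
    [FirstCountableTopology X] [T2Space Y] (hT : Continuous T) (hρ : Continuous ρ)
    (hsemi : Semiconj ρ T S) {x : X} (hrec : RecurrentPt S (ρ x)) :
    ∃ x' : X, ρ x' = ρ x ∧ ProximalPair T x' x ∧ RecurrentPt T x' := by
  set G : Set (X → X) := {h | (∀ m, h ∈ envelopeFrom T m) ∧ ρ (h x) = ρ x}
  have hG : IsClosed G := by
    simp only [G, ofPred_and, ofPred_forall, ofPred_mem_eq]
    exact (isClosed_iInter fun m => isClosed_closure).inter
      (isClosed_eq (hρ.comp (continuous_apply x)) continuous_const)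
  have hcomp : ∀ f ∈ G, ∀ g ∈ G, f ∘ g ∈ G := fun f hf g hg =>
    ⟨fun m => comp_mem_envelopeFrom hT (hf.1 0) (hg.1 m),
      (apply_eq_of_mem_envelopeFrom hρ hsemi (hf.1 0) hg.2).trans hf.2⟩
  obtain ⟨u, ⟨huE, hux⟩, huu⟩ := exists_comp_self_eq_of_isCompact
    (exists_mem_envelopeFrom_apply_eq hρ hsemi hrec) hG.isCompact hcomp
  have hfix : u (u x) = u x := congrFun huu x
  exact ⟨u x, hux, proximalPair_of_apply_eq (huE 0) hfix, recurrentPt_of_apply_eq_self huE hfix⟩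

end Factor

theorem statement_14_general {X Y : Type} [MetricSpace X] [CompactSpace X]
    [MetricSpace Y] [CompactSpace Y]
    (F : Set (Set ℕ))
    (T : X → X) (hTc : Continuous T)
    (S : Y → Y)
    (π : X → Y) (hπc : Continuous π)
    (hsemi : ∀ x : X, π (T x) = S (π x)) :
    (∀ x : X, FProductRecurrent F T x → FProductRecurrent F S (π x)) ∧
      (∀ x : X, (∀ x' : X, ProximalPair T x' x → π x' = π x → x' = x) →
        FProductRecurrent F S (π x) → FProductRecurrent F T x) ∧
      (∀ x : X, π ⁻¹' {π x} = {x} →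
        FProductRecurrent F S (π x) → FProductRecurrent F T x) := by
  have hsemi_prod : ∀ (Z : Type) (R : Z → Z),
      Semiconj (Prod.map π id) (Prod.map T R) (Prod.map S R) :=
    fun _ _ p => Prod.ext (hsemi p.1) rfl
  have lift : ∀ x : X, (∀ x' : X, ProximalPair T x' x → π x' = π x → x' = x) →
      FProductRecurrent F S (π x) → FProductRecurrent F T x := by
    intro x hdistal hx Z _ _ R hRc hRs z hz
    obtain ⟨⟨x', z'⟩, hfib, hprox, hrec⟩ :=
      exists_recurrentPt_proximalPair_of_recurrentPt_map (hTc.prodMap hRc)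
        (hπc.prodMap continuous_id) (hsemi_prod Z R) (x := (x, z)) (hx Z R hRc hRs z hz)
    obtain ⟨hπx', rfl : z' = z⟩ := Prod.ext_iff.mp hfib
    rwa [← hdistal x' (hprox.map continuous_fst fun _ => rfl) hπx']
  refine ⟨fun x hx Z _ _ R hRc hRs z hz => ?_, lift, fun x hfib => lift x fun x' _ hx' => ?_⟩
  · exact (hx Z R hRc hRs z hz).map (hπc.prodMap continuous_id) (hsemi_prod Z R)
  · simpa only [hfib, mem_singleton_iff] using (show x' ∈ π ⁻¹' {π x} from hx')

/-- behaviour of `F`-product recurrence under a factor map `π`. -/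
theorem statement_14 {X Y : Type} [MetricSpace X] [CompactSpace X]
    [MetricSpace Y] [CompactSpace Y]
    (F : Set (Set ℕ)) (hF : ∀ A B : Set ℕ, A ∈ F → A ⊆ B → B ∈ F)
    (T : X → X) (hTc : Continuous T) (hTs : Function.Surjective T)
    (S : Y → Y) (hSc : Continuous S) (hSs : Function.Surjective S)
    (π : X → Y) (hπc : Continuous π) (hπs : Function.Surjective π)
    (hsemi : ∀ x : X, π (T x) = S (π x)) :
    (∀ x : X, FProductRecurrent F T x → FProductRecurrent F S (π x)) ∧
      (∀ x : X, (∀ x' : X, ProximalPair T x' x → π x' = π x → x' = x) →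
        FProductRecurrent F S (π x) → FProductRecurrent F T x) ∧
      (∀ x : X, π ⁻¹' {π x} = {x} →
        FProductRecurrent F S (π x) → FProductRecurrent F T x) :=
  statement_14_general F T hTc S π hπc hsemi

end PaperFormal
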